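/- In the sequential scheduling game on m unrelated machines where players have 1-lookahead, every 1-lookahead play of all n jobs starting from zero initial loads has makespan at most 3m·OPT; in particular the sequential price of anarchy for 1-lookahead players on m machines is O(m). -/

import Mathlib

/-!
Sequential scheduling game on `m` unrelated machines with `k`-lookahead players.
Machines are indexed by `Fin m`, jobs by natural numbers (a block `[a:b]` of jobs plays
in the order `a, a+1, …, b`), and `p i j` is the processing time of job `j` on machine `i`.
-/

/-- Add the processing time of job `j` on machine `i` to the load vector `D`. -/
def bump {m : ℕ} (p : Fin m → ℕ → ℝ) (D : Fin m → ℝ) (i : Fin m) (j : ℕ) : Fin m → ℝ :=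
  fun i' => D i' + if i' = i then p i j else 0

/-- `Out p D js F`: `F` is the final load vector of some backward-induction
(subgame-perfect, ties broken arbitrarily) play of the finite extensive game in which
the jobs in `js` choose machines in order, starting from loads `D`; the payoff of each
job is the load, after all of these moves, of the machine it chose. -/
inductive Out {m : ℕ} (p : Fin m → ℕ → ℝ) : (Fin m → ℝ) → List ℕ → (Fin m → ℝ) → Prop
  | nil (D : Fin m → ℝ) : Out p D [] D
  | cons (D : Fin m → ℝ) (j : ℕ) (js : List ℕ) (i : Fin m) (cont : Fin m → Fin m → ℝ)
      (hcont : ∀ i', Out p (bump p D i' j) js (cont i'))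
      (hopt : ∀ i', cont i i ≤ cont i' i') :
      Out p D (j :: js) (cont i)

/-- `i` is an optimal root move, for the root job `j` followed by the jobs `js`,
of the lookahead game starting from loads `D`, solved by backward induction
(ties broken arbitrarily). -/
def RootMove {m : ℕ} (p : Fin m → ℕ → ℝ) (D : Fin m → ℝ) (j : ℕ) (js : List ℕ)
    (i : Fin m) : Prop :=
  ∃ cont : Fin m → Fin m → ℝ,
    (∀ i', Out p (bump p D i' j) js (cont i')) ∧ (∀ i', cont i i ≤ cont i' i')

/-- `Play p k D a b F`: starting from initial loads `D`, the block `[a:b]` of jobs plays a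
`k`-lookahead play resulting in final loads `F`: the first remaining job `a` makes an
optimal root move of the lookahead game on jobs `a, a+1, …, min (a+k) b`, its processing
time is added to the chosen machine, and the remaining jobs continue. -/
inductive Play {m : ℕ} (p : Fin m → ℕ → ℝ) (k : ℕ) :
    (Fin m → ℝ) → ℕ → ℕ → (Fin m → ℝ) → Prop
  | nil (D : Fin m → ℝ) (a b : ℕ) (h : b < a) : Play p k D a b D
  | cons (D : Fin m → ℝ) (a b : ℕ) (i : Fin m) (F : Fin m → ℝ) (hab : a ≤ b)
      (hroot : RootMove p D a (List.range' (a + 1) (min (a + k) b - a)) i)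
      (hplay : Play p k (bump p D i a) (a + 1) b F) :
      Play p k D a b F

/-- Maximum load of a load vector. -/
noncomputable def maxLoad {m : ℕ} (D : Fin m → ℝ) : ℝ := ⨆ i, D i

/-- `ΔL([a:b])`: the maximum possible increase of the makespan caused by the block
`[a:b]` of jobs, over all nonnegative initial loads and all `k`-lookahead plays. -/
noncomputable def deltaL {m : ℕ} (p : Fin m → ℕ → ℝ) (k a b : ℕ) : ℝ :=
  sSup {x | ∃ D F : Fin m → ℝ,
    (∀ i, 0 ≤ D i) ∧ Play p k D a b F ∧ x = maxLoad F - maxLoad D}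

/-- Minimum processing time of job `j`. -/
noncomputable def pmin {m : ℕ} (p : Fin m → ℕ → ℝ) (j : ℕ) : ℝ := ⨅ i, p i j

/-- Makespan of an arbitrary schedule `τ` of jobs `1, …, n` on `m` machines. -/
noncomputable def makespanM {m : ℕ} (n : ℕ) (p : Fin m → ℕ → ℝ) (τ : ℕ → Fin m) : ℝ :=
  ⨆ i, ∑ j ∈ Finset.Icc 1 n, if τ j = i then p i j else 0

/-- Optimal (minimum) makespan over all schedules of jobs `1, …, n`. -/
noncomputable def OPTm {m : ℕ} (n : ℕ) (p : Fin m → ℕ → ℝ) : ℝ :=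
  sInf {x | ∃ τ : ℕ → Fin m, x = makespanM n p τ}

/-!
Place job `a` on a machine `i₁` where it is fastest. Whatever job `a + 1` then does, the load
of `i₁` ends below `maxLoad D + p_a + p_{a+1}`: either job `a + 1` avoids `i₁`, leaving it at
`D i₁ + p_a`, or it joins `i₁`, which it only does if that is no worse than its own fastest
machine, whose load is at most `maxLoad D + p_a + p_{a+1}`. Since job `a` plays optimally in this
two-step game, its own completion time obeys the same bound. Hence every job raises the makespan
by at most `p_a + p_{a+1}`, so a 1-lookahead play ends with makespan at most `2 ∑ p_j`, and
`∑ p_j ≤ m · OPT` because every schedule spends at least `∑ p_j` on its `m` machines.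
-/

open Finset

variable {m : ℕ} {p : Fin m → ℕ → ℝ}

lemma le_maxLoad (D : Fin m → ℝ) (x : Fin m) : D x ≤ maxLoad D :=
  le_ciSup (Set.finite_range D).bddAbove x

lemma maxLoad_le [Nonempty (Fin m)] {D : Fin m → ℝ} {c : ℝ} (h : ∀ x, D x ≤ c) :
    maxLoad D ≤ c :=
  ciSup_le h

lemma pmin_le (j : ℕ) (x : Fin m) : pmin p j ≤ p x j :=
  ciInf_le (Set.finite_range _).bddBelow x

lemma pmin_nonneg [Nonempty (Fin m)] (hp : ∀ i j, 0 ≤ p i j) (j : ℕ) : 0 ≤ pmin p j :=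
  le_ciInf fun i => hp i j

lemma exists_le_pmin [Nonempty (Fin m)] (p : Fin m → ℕ → ℝ) (j : ℕ) :
    ∃ i, p i j ≤ pmin p j :=
  let ⟨i, hi⟩ := Finite.exists_min fun x => p x j
  ⟨i, le_ciInf hi⟩

lemma bump_le_maxLoad_add (hp : ∀ i j, 0 ≤ p i j) (D : Fin m → ℝ) (i x : Fin m) (j : ℕ) :
    bump p D i j x ≤ maxLoad D + p i j := by
  have := le_maxLoad D x
  have := hp i j
  unfold bump
  split_ifs with hx
  · subst hx; linarith
  · linarith

lemma maxLoad_bump_le [Nonempty (Fin m)] {D : Fin m → ℝ} {i : Fin m} {j : ℕ} {c : ℝ}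
    (hD : ∀ x, D x ≤ c) (hi : D i + p i j ≤ c) : maxLoad (bump p D i j) ≤ c := by
  refine maxLoad_le fun x => ?_
  by_cases hx : x = i
  · subst hx; simpa [bump] using hi
  · simpa [bump, hx] using hD x

namespace Out

lemma le (hp : ∀ i j, 0 ≤ p i j) {D F : Fin m → ℝ} {js : List ℕ} (h : Out p D js F)
    (x : Fin m) : D x ≤ F x := by
  induction h with
  | nil D => exact le_rfl
  | cons D j js i cont hcont hopt ih =>
      refine le_trans ?_ (ih i)
      have : (0 : ℝ) ≤ if x = i then p i j else 0 := by split_ifs <;> simp [hp]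
      simp only [bump]
      linarith

lemma eq_of_nil {D F : Fin m → ℝ} (h : Out p D [] F) : F = D := by
  cases h; rfl

lemma singleton_le {D F : Fin m → ℝ} {j : ℕ} (h : Out p D [j] F) (x y : Fin m) :
    F x ≤ max (D x) (D y + p y j) := by
  cases h with
  | cons _ _ _ i cont hcont hopt =>
      have hcont' : ∀ i', cont i' = bump p D i' j := fun i' => (hcont i').eq_of_nil
      by_cases hx : x = i
      · subst hx
        have := hopt y
        simp only [hcont', bump, ↓reduceIte] at this
        simp only [hcont', bump, ↓reduceIte]
        exact le_max_of_le_right this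
      · simp [hcont', bump, hx]

end Out

namespace RootMove

lemma le_of_nil [Nonempty (Fin m)] {D : Fin m → ℝ} {j : ℕ} {i : Fin m}
    (h : RootMove p D j [] i) : D i + p i j ≤ maxLoad D + pmin p j := by
  obtain ⟨cont, hcont, hopt⟩ := h
  obtain ⟨i₁, hi₁⟩ := exists_le_pmin p j
  have hcont' : ∀ i', cont i' = bump p D i' j := fun i' => (hcont i').eq_of_nil
  have := hopt i₁
  simp only [hcont', bump, ↓reduceIte] at this
  linarith [le_maxLoad D i₁]

lemma le_of_singleton [Nonempty (Fin m)] (hp : ∀ i j, 0 ≤ p i j) {D : Fin m → ℝ} {j j' : ℕ}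
    {i : Fin m} (h : RootMove p D j [j'] i) :
    D i + p i j ≤ maxLoad D + pmin p j + pmin p j' := by
  obtain ⟨cont, hcont, hopt⟩ := h
  obtain ⟨i₁, hi₁⟩ := exists_le_pmin p j
  obtain ⟨i₂, hi₂⟩ := exists_le_pmin p j'
  have hstay : bump p D i₁ j i₁ ≤ maxLoad D + pmin p j + pmin p j' := by
    simp only [bump, ↓reduceIte]
    linarith [le_maxLoad D i₁, pmin_nonneg hp j']
  have hmove : bump p D i₁ j i₂ + p i₂ j' ≤ maxLoad D + pmin p j + pmin p j' := by
    linarith [bump_le_maxLoad_add hp D i₁ i₂ j]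
  calc D i + p i j
      ≤ cont i i := by simpa [bump] using (hcont i).le hp i
    _ ≤ cont i₁ i₁ := hopt i₁
    _ ≤ max (bump p D i₁ j i₁) (bump p D i₁ j i₂ + p i₂ j') := (hcont i₁).singleton_le i₁ i₂
    _ ≤ maxLoad D + pmin p j + pmin p j' := max_le hstay hmove

end RootMove

lemma Play.maxLoad_le_of_lookahead_one [Nonempty (Fin m)] (hp : ∀ i j, 0 ≤ p i j)
    {D F : Fin m → ℝ} {a b : ℕ} (h : Play p 1 D a b F) :
    maxLoad F ≤ maxLoad D + ∑ j ∈ Icc a b, pmin p j + ∑ j ∈ Ioc a b, pmin p j := by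
  induction h with
  | nil D a b hba =>
      simp [Icc_eq_empty_of_lt hba, Ioc_eq_empty_of_le hba.le]
  | cons D a b i F hab hroot hplay ih =>
      have hD : ∀ c, 0 ≤ c → ∀ x, D x ≤ maxLoad D + c := fun c hc x => by
        linarith [le_maxLoad D x]
      rw [Icc_add_one_left_eq_Ioc] at ih
      rw [← add_sum_Ioc_eq_sum_Icc hab]
      rcases hab.eq_or_lt with rfl | hlt
      · rw [show min (a + 1) a - a = 0 by omega, List.range'_zero] at hroot
        have := maxLoad_bump_le (hD _ (pmin_nonneg hp a)) hroot.le_of_nil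
        simp only [Ioc_self, Ioc_eq_empty_of_le a.le_succ, sum_empty] at ih ⊢
        linarith
      · rw [show min (a + 1) b - a = 1 by omega, List.range'_one] at hroot
        have := maxLoad_bump_le
          (hD _ (add_nonneg (pmin_nonneg hp a) (pmin_nonneg hp (a + 1))))
          (by rw [← add_assoc]; exact hroot.le_of_singleton hp)
        have hsplit :
            ∑ j ∈ Ioc a b, pmin p j = pmin p (a + 1) + ∑ j ∈ Ioc (a + 1) b, pmin p j := by
          rw [← Icc_add_one_left_eq_Ioc, add_sum_Ioc_eq_sum_Icc hlt]
        rw [hsplit] at ih ⊢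
        linarith

lemma sum_pmin_le_mul_makespanM (n : ℕ) (τ : ℕ → Fin m) :
    ∑ j ∈ Icc 1 n, pmin p j ≤ m * makespanM n p τ := by
  have hmachine : ∀ i, (∑ j ∈ Icc 1 n, if τ j = i then p i j else 0) ≤ makespanM n p τ :=
    le_ciSup (f := fun i => ∑ j ∈ Icc 1 n, if τ j = i then p i j else 0)
      (Set.finite_range _).bddAbove
  calc ∑ j ∈ Icc 1 n, pmin p j
      ≤ ∑ j ∈ Icc 1 n, p (τ j) j := sum_le_sum fun j _ => pmin_le j (τ j)
    _ = ∑ i, ∑ j ∈ Icc 1 n, if τ j = i then p i j else 0 := by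
        rw [sum_comm]
        simp
    _ ≤ ∑ _i : Fin m, makespanM n p τ := sum_le_sum fun i _ => hmachine i
    _ = m * makespanM n p τ := by simp

lemma sum_pmin_le_mul_OPTm (hm : 0 < m) (n : ℕ) :
    ∑ j ∈ Icc 1 n, pmin p j ≤ m * OPTm n p := by
  have hm' : (0 : ℝ) < m := by exact_mod_cast hm
  have : (∑ j ∈ Icc 1 n, pmin p j) / m ≤ OPTm n p := by
    refine le_csInf ⟨_, ⟨fun _ => ⟨0, hm⟩, rfl⟩⟩ ?_
    rintro _ ⟨τ, rfl⟩
    rw [div_le_iff₀' hm']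
    exact sum_pmin_le_mul_makespanM n τ
  rwa [div_le_iff₀' hm'] at this

/-- On `m` unrelated machines with 1-lookahead players, every
1-lookahead play of all `n` jobs from zero initial loads has makespan at most
`3m · OPT`; in particular the sequential price of anarchy is `O(m)`. -/
theorem spoa_oneLookahead_m_machines (m n : ℕ) (hm : 0 < m)
    (p : Fin m → ℕ → ℝ) (hp : ∀ i j, 0 ≤ p i j)
    (F : Fin m → ℝ) (hF : Play p 1 (fun _ => 0) 1 n F) :
    maxLoad F ≤ 3 * (m : ℝ) * OPTm n p := by
  have : Nonempty (Fin m) := Fin.pos_iff_nonempty.mp hm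
  have hplay := hF.maxLoad_le_of_lookahead_one hp
  have hzero : maxLoad (fun _ : Fin m => (0 : ℝ)) = 0 := ciSup_const
  have hIoc : ∑ j ∈ Ioc 1 n, pmin p j ≤ ∑ j ∈ Icc 1 n, pmin p j :=
    sum_le_sum_of_subset_of_nonneg Ioc_subset_Icc_self fun j _ _ => pmin_nonneg hp j
  have hsum_nonneg : 0 ≤ ∑ j ∈ Icc 1 n, pmin p j := sum_nonneg fun j _ => pmin_nonneg hp j
  have hOPT := sum_pmin_le_mul_OPTm (p := p) hm n
  linarith
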